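/- For finite-dimensional partial groups X and Y, the coproduct X ∨ Y in the category of partial groups satisfies dim(X ∨ Y) = max(dim X, dim Y). -/

import Mathlib

open CategoryTheory Opposite

/-- The skeleton of the category of finite nonempty sets: objects are natural
numbers `n`, standing for `[n] = {0, …, n}`, morphisms are all functions. -/
def Ups : Type := ℕ

/-- The natural number underlying an object of `Ups`. -/
def Ups.toNat : Ups → ℕ := fun n => n

/-- The object `[n]` of `Ups`. -/
def Ups.of : ℕ → Ups := fun n => n

instance : Category Ups where
  Hom n m := Fin (n.toNat + 1) → Fin (m.toNat + 1)
  id _ := _root_.id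
  comp f g := g ∘ f

/-- A symmetric set is a presheaf on `Ups`. -/
abbrev SymmSet := Upsᵒᵖ ⥤ Type

/-- The map `ε_{ij} : [1] → [n]` sending `0, 1` to `i, j`. -/
def eps (n : ℕ) (i j : Fin (n + 1)) : Ups.of 1 ⟶ Ups.of n :=
  fun k => if k = 0 then i else j

/-- The set of `n`-simplices of a symmetric set. -/
abbrev simp (X : SymmSet) (n : ℕ) : Type := X.obj (op (Ups.of n))

/-- The Bousfield–Segal map `𝓑ₙ : Xₙ → X₁ⁿ`, `x ↦ (ε₀₁*x, …, ε₀ₙ*x)`. -/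
def BS (X : SymmSet) (n : ℕ) (x : simp X n) : Fin n → simp X 1 :=
  fun k => X.map (eps n 0 k.succ).op x

/-- The Segal map `𝓔ₙ : Xₙ → X₁ⁿ`, `x ↦ (ε₀₁*x, ε₁₂*x, …, ε₍ₙ₋₁₎ₙ*x)`. -/
def ES (X : SymmSet) (n : ℕ) (x : simp X n) : Fin n → simp X 1 :=
  fun k => X.map (eps n k.castSucc k.succ).op x

/-- The canonical map `μ_X` to matrices, `x ↦ (ε_{ij}* x)_{ij}`. -/
def muMat (X : SymmSet) (n : ℕ) (x : simp X n) :
    Fin (n + 1) → Fin (n + 1) → simp X 1 :=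
  fun i j => X.map (eps n i j).op x

/-- A symmetric set is spiny if all Bousfield–Segal maps are injective. -/
def Spiny (X : SymmSet) : Prop := ∀ n, Function.Injective (BS X n)
/-- The matrix symmetric set `Mat(S)`: `n`-simplices are functions `[n]×[n] → S`. -/
def MatS (S : Type) : SymmSet where
  obj k := Fin (k.unop.toNat + 1) → Fin (k.unop.toNat + 1) → S
  map f := TypeCat.ofHom fun M => fun a b => M (f.unop a) (f.unop b)
  map_id := by intros; rfl
  map_comp := by intros; rfl

/-- An `n`-simplex is degenerate if it is `ρ* y` for a noninvertible surjection
`ρ : [n] ↠ [m]` and an `m`-simplex `y`. -/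
def Degen (X : SymmSet) (n : ℕ) (x : simp X n) : Prop :=
  ∃ (m : ℕ) (ρ : Ups.of n ⟶ Ups.of m), Function.Surjective ρ ∧
    ¬ Function.Bijective ρ ∧ ∃ y : simp X m, x = X.map ρ.op y

/-- The `d`-skeleton of a symmetric set, as a symmetric subset. -/
def skel (X : SymmSet) (d : ℕ) : SymmSet where
  obj k := {x : X.obj k // ∃ (i : ℕ) (_ : i ≤ d) (α : k.unop ⟶ Ups.of i)
      (y : simp X i), x = X.map α.op y}
  map f := TypeCat.ofHom fun x => ⟨X.map f x.1, by
    obtain ⟨i, hi, α, y, hy⟩ := x.2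
    refine ⟨i, hi, f.unop ≫ α, y, ?_⟩
    rw [hy, ← FunctorToTypes.map_comp_apply]
    rfl⟩
  map_id := by
    intro k; ext x
    first | rfl | simp
  map_comp := by
    intro k k' k'' f g; ext x
    first | rfl | simp

/-- A symmetric set is `d`-skeletal when all simplices above dimension `d`
are degenerate. -/
def SkeletalLE (X : SymmSet) (d : ℕ) : Prop :=
  ∀ n, d < n → ∀ x : simp X n, Degen X n x

/-- `X` has dimension `d` when `d` is the least integer such that `X` is
`d`-skeletal. -/
def HasDim (X : SymmSet) (d : ℕ) : Prop :=
  IsLeast {m | SkeletalLE X m} d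

/-- A symmetric set is reduced when it has exactly one `0`-simplex. -/
def Reduced (X : SymmSet) : Prop :=
  Nonempty (simp X 0) ∧ Subsingleton (simp X 0)

/-- A partial group is a reduced spiny symmetric set. -/
def IsPartialGroup (X : SymmSet) : Prop := Reduced X ∧ Spiny X

/-- A partial group is trivial when it has no nonidentity elements. -/
def TrivialPG (X : SymmSet) : Prop := Subsingleton (simp X 1)

/-- The order of a partial group: the number of its elements (edges). -/
noncomputable def orderPG (X : SymmSet) : ℕ := Nat.card (simp X 1)

/-- An edge is an identity if it is in the image of the degeneracy `X₀ → X₁`. -/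
def isIdent (X : SymmSet) (e : simp X 1) : Prop :=
  ∃ v : simp X 0, e = X.map (Quiver.Hom.op
    ((fun _ => 0 : Fin 2 → Fin 1) : Ups.of 1 ⟶ Ups.of 0)) v

/-- The source vertex of an edge. -/
def srcE (X : SymmSet) (e : simp X 1) : simp X 0 :=
  X.map (Quiver.Hom.op ((fun _ => 0 : Fin 1 → Fin 2) : Ups.of 0 ⟶ Ups.of 1)) e

/-- `X` has (higher Segal) degree at most `k`: for each starry word `w` of
length `n+1 ≥ k+1`, if the last `k+1` faces `d_{n+1-k} w, …, d_{n+1} w` of `w`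
are Bousfield–Segal images of simplices, then so is `w`. -/
def HasDegLE (X : SymmSet) (k : ℕ) : Prop :=
  ∀ n, k ≤ n → ∀ w : Fin (n + 1) → simp X 1,
    (∀ a b, srcE X (w a) = srcE X (w b)) →
    (∀ i : Fin (n + 1), n ≤ (i : ℕ) + k →
      (fun j : Fin n => w (i.succAbove j)) ∈ Set.range (BS X n)) →
    w ∈ Set.range (BS X (n + 1))

/-- `X` has degree `d`: `d` is the least `k ≥ 1` with `HasDegLE X k`. -/
def DegreeIs (X : SymmSet) (d : ℕ) : Prop :=
  IsLeast {k | 1 ≤ k ∧ HasDegLE X k} d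

/-- `W`, with structure maps `i, j`, is a coproduct of `Y` and `Z` in the
category of partial groups. -/
def IsPGCoproduct (W Y Z : SymmSet) (i : Y ⟶ W) (j : Z ⟶ W) : Prop :=
  ∀ V : SymmSet, IsPartialGroup V → ∀ (f : Y ⟶ V) (g : Z ⟶ V),
    ∃! h : W ⟶ V, i ≫ h = f ∧ j ≫ h = g

/-- The nerve of a group `G`, as a symmetric set: an `n`-simplex is a matrix
`(g_{ij})` of elements of `G` satisfying the cocycle condition. -/
def grpNerve (G : Type) [Group G] : SymmSet where
  obj k := {M : Fin (k.unop.toNat + 1) → Fin (k.unop.toNat + 1) → G //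
      ∀ i j l, M i j * M j l = M i l}
  map f := TypeCat.ofHom fun M => ⟨fun a b => M.1 (f.unop a) (f.unop b),
    fun i j l => M.2 (f.unop i) (f.unop j) (f.unop l)⟩
  map_id := by intro k; rfl
  map_comp := by intros; rfl

/-- A partial group is decomposable if it is a coproduct (in the category of
partial groups) of two nontrivial partial groups. -/
def PGDecomposable (X : SymmSet) : Prop :=
  ∃ (Y Z : SymmSet) (i : Y ⟶ X) (j : Z ⟶ X),
    IsPartialGroup Y ∧ IsPartialGroup Z ∧ ¬ TrivialPG Y ∧ ¬ TrivialPG Z ∧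
      IsPGCoproduct X Y Z i j

/-- A partial group is indecomposable if it is nontrivial and in any coproduct
decomposition one of the factors is trivial. -/
def PGIndecomposable (X : SymmSet) : Prop :=
  ¬ TrivialPG X ∧
    ∀ (Y Z : SymmSet) (i : Y ⟶ X) (j : Z ⟶ X), IsPartialGroup Y →
      IsPartialGroup Z → IsPGCoproduct X Y Z i j → TrivialPG Y ∨ TrivialPG Z

/-! The wedge of reduced symmetric sets `X` and `Y` can be realised without a quotient, as
the symmetric subset of `X × Y` of pairs with a coordinate at the basepoint. It is spiny
when `X` and `Y` are, so it is a partial group with the universal property of the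
coproduct, and hence isomorphic to `W`. Maps of symmetric sets preserve degenerate simplices,
so a retract of a `d`-skeletal symmetric set is `d`-skeletal. Both `X` and `Y` are retracts of
the wedge, and every simplex of the wedge comes from `X` or from `Y`; hence the wedge is
`d`-skeletal exactly when `X` and `Y` both are, and its dimension is `max dx dy`. -/

lemma Degen.map {X V : SymmSet} (f : X ⟶ V) {n : ℕ} {x : simp X n} (hx : Degen X n x) :
    Degen V n (f.app _ x) := by
  obtain ⟨m, ρ, hsurj, hbij, y, rfl⟩ := hx
  exact ⟨m, ρ, hsurj, hbij, f.app _ y, NatTrans.naturality_apply f ρ.op y⟩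

lemma SkeletalLE.mono {X : SymmSet} {d d' : ℕ} (hd : d ≤ d') (hX : SkeletalLE X d) :
    SkeletalLE X d' :=
  fun n hn => hX n (hd.trans_lt hn)

lemma SkeletalLE.of_retract {W V : SymmSet} (r : W ⟶ V) (s : V ⟶ W) (hrs : r ≫ s = 𝟙 W)
    {d : ℕ} (hV : SkeletalLE V d) : SkeletalLE W d := by
  intro n hn w
  have hw : s.app _ (r.app _ w) = w := congrArg (fun φ : W ⟶ W => φ.app _ w) hrs
  exact hw ▸ (hV n hn _).map s

lemma HasDim.of_iso {W V : SymmSet} (e : W ≅ V) {d : ℕ} (hV : HasDim V d) : HasDim W d :=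
  ⟨hV.1.of_retract e.hom e.inv e.hom_inv_id,
    fun _ hW => hV.2 (hW.of_retract e.inv e.hom e.inv_hom_id)⟩

lemma HasDim.max_of_skeletalLE_iff {X Y V : SymmSet} {dx dy : ℕ} (hX : HasDim X dx)
    (hY : HasDim Y dy) (hV : ∀ m, SkeletalLE V m ↔ SkeletalLE X m ∧ SkeletalLE Y m) :
    HasDim V (max dx dy) :=
  ⟨(hV _).2 ⟨hX.1.mono (le_max_left _ _), hY.1.mono (le_max_right _ _)⟩,
    fun _ hm => max_le (hX.2 ((hV _).1 hm).1) (hY.2 ((hV _).1 hm).2)⟩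

namespace SymmSet

def toPt (k : Ups) : k ⟶ Ups.of 0 := fun _ => 0

lemma comp_toPt {k k' : Ups} (f : k ⟶ k') : f ≫ toPt k' = toPt k :=
  funext fun _ => Subsingleton.elim (α := Fin 1) _ _

section Basepoint

variable {X : SymmSet} (hX : Reduced X)

noncomputable def basept (a : Upsᵒᵖ) : X.obj a :=
  X.map (toPt a.unop).op hX.1.some

lemma map_basept {a b : Upsᵒᵖ} (f : a ⟶ b) : X.map f (basept hX a) = basept hX b := by
  rw [basept, ← Functor.map_comp_apply]
  change X.map (f.unop ≫ toPt a.unop).op _ = _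
  rw [comp_toPt]
  rfl

lemma app_basept {V : SymmSet} (hV : Reduced V) (f : X ⟶ V) (a : Upsᵒᵖ) :
    f.app a (basept hX a) = basept hV a := by
  rw [basept, NatTrans.naturality_apply, basept, hV.2.allEq (f.app _ _)]

end Basepoint

section Wedge

variable {X Y : SymmSet} (hX : Reduced X) (hY : Reduced Y)

noncomputable def wedge : SymmSet where
  obj a := {p : X.obj a × Y.obj a // p.1 = basept hX a ∨ p.2 = basept hY a}
  map f := TypeCat.ofHom fun p => ⟨(X.map f p.1.1, Y.map f p.1.2), by
    rcases p.2 with h | h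
    · exact Or.inl (by rw [h, map_basept])
    · exact Or.inr (by rw [h, map_basept])⟩
  map_id _ := ConcreteCategory.hom_ext _ _ fun _ =>
    Subtype.ext (Prod.ext (Functor.map_id_apply X _ _) (Functor.map_id_apply Y _ _))
  map_comp _ _ := ConcreteCategory.hom_ext _ _ fun _ =>
    Subtype.ext (Prod.ext (Functor.map_comp_apply X _ _ _) (Functor.map_comp_apply Y _ _ _))

namespace wedge

noncomputable def inl : X ⟶ wedge hX hY where
  app a := TypeCat.ofHom fun x => ⟨(x, basept hY a), Or.inr rfl⟩
  naturality _ _ f := by ext; simp [wedge, map_basept]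

noncomputable def inr : Y ⟶ wedge hX hY where
  app a := TypeCat.ofHom fun y => ⟨(basept hX a, y), Or.inl rfl⟩
  naturality _ _ f := by ext; simp [wedge, map_basept]

def fst : wedge hX hY ⟶ X where
  app a := TypeCat.ofHom fun p => p.1.1

def snd : wedge hX hY ⟶ Y where
  app a := TypeCat.ofHom fun p => p.1.2

lemma inl_fst : inl hX hY ≫ fst hX hY = 𝟙 X := rfl

lemma inr_snd : inr hX hY ≫ snd hX hY = 𝟙 Y := rfl

lemma inl_or_inr {a : Upsᵒᵖ} (p : (wedge hX hY).obj a) :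
    (∃ x, (inl hX hY).app a x = p) ∨ ∃ y, (inr hX hY).app a y = p := by
  obtain ⟨⟨x, y⟩, h | h⟩ := p <;> dsimp only at h <;> subst h
  · exact Or.inr ⟨y, rfl⟩
  · exact Or.inl ⟨x, rfl⟩

lemma hom_ext {V : SymmSet} {φ ψ : wedge hX hY ⟶ V} (hl : inl hX hY ≫ φ = inl hX hY ≫ ψ)
    (hr : inr hX hY ≫ φ = inr hX hY ≫ ψ) : φ = ψ := by
  ext a p
  rcases inl_or_inr hX hY p with ⟨x, rfl⟩ | ⟨y, rfl⟩
  · exact congrArg (fun χ : X ⟶ V => χ.app a x) hl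
  · exact congrArg (fun χ : Y ⟶ V => χ.app a y) hr

lemma reduced : Reduced (wedge hX hY) :=
  ⟨⟨⟨(basept hX _, basept hY _), Or.inl rfl⟩⟩,
    ⟨fun _ _ => Subtype.ext (Prod.ext (hX.2.allEq _ _) (hY.2.allEq _ _))⟩⟩

lemma spiny (sX : Spiny X) (sY : Spiny Y) : Spiny (wedge hX hY) := fun n _ _ h =>
  Subtype.ext (Prod.ext (sX n (funext fun k => congrArg (fun e => e.1.1) (congrFun h k)))
    (sY n (funext fun k => congrArg (fun e => e.1.2) (congrFun h k))))

lemma skeletalLE_iff (d : ℕ) :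
    SkeletalLE (wedge hX hY) d ↔ SkeletalLE X d ∧ SkeletalLE Y d := by
  refine ⟨fun h => ⟨h.of_retract _ _ (inl_fst hX hY), h.of_retract _ _ (inr_snd hX hY)⟩,
    fun ⟨hXd, hYd⟩ n hn p => ?_⟩
  rcases inl_or_inr hX hY p with ⟨x, rfl⟩ | ⟨y, rfl⟩
  · exact (hXd n hn x).map _
  · exact (hYd n hn y).map _

section Desc

variable {V : SymmSet} (f : X ⟶ V) (g : Y ⟶ V)

open Classical in
noncomputable def descApp (a : Upsᵒᵖ) (p : (wedge hX hY).obj a) : V.obj a :=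
  if p.1.2 = basept hY a then f.app a p.1.1 else g.app a p.1.2

lemma descApp_of_snd {a : Upsᵒᵖ} {p : (wedge hX hY).obj a} (h : p.1.2 = basept hY a) :
    descApp hX hY f g a p = f.app a p.1.1 :=
  if_pos h

-- Well defined on the pair of basepoints because `f` and `g` both send it to the basepoint of `V`.
lemma descApp_of_fst (hV : Reduced V) {a : Upsᵒᵖ} {p : (wedge hX hY).obj a} (h : p.1.1 = basept hX a) :
    descApp hX hY f g a p = g.app a p.1.2 := by
  by_cases h' : p.1.2 = basept hY a
  · rw [descApp_of_snd hX hY f g h', h, h', app_basept hX hV, app_basept hY hV]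
  · exact if_neg h'

noncomputable def desc (hV : Reduced V) : wedge hX hY ⟶ V where
  app a := TypeCat.ofHom (descApp hX hY f g a)
  naturality a b u := ConcreteCategory.hom_ext _ _ fun p => by
    change descApp hX hY f g b ((wedge hX hY).map u p) = V.map u (descApp hX hY f g a p)
    rcases p.2 with h | h
    · have hu : ((wedge hX hY).map u p).1.1 = basept hX b := (congrArg _ h).trans (map_basept hX u)
      rw [descApp_of_fst hX hY f g hV hu, descApp_of_fst hX hY f g hV h]
      exact NatTrans.naturality_apply g u _
    · have hu : ((wedge hX hY).map u p).1.2 = basept hY b := (congrArg _ h).trans (map_basept hY u)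
      rw [descApp_of_snd hX hY f g hu, descApp_of_snd hX hY f g h]
      exact NatTrans.naturality_apply f u _

lemma inl_desc : inl hX hY ≫ desc hX hY f g hV = f := by
  ext a x
  exact descApp_of_snd hX hY f g rfl

lemma inr_desc : inr hX hY ≫ desc hX hY f g hV = g := by
  ext a y
  exact descApp_of_fst hX hY f g hV rfl

end Desc

end wedge

end Wedge

end SymmSet

open SymmSet in
lemma IsPGCoproduct.nonempty_iso_wedge {W X Y : SymmSet} {i : X ⟶ W} {j : Y ⟶ W}
    (hco : IsPGCoproduct W X Y i j) (hX : IsPartialGroup X) (hY : IsPartialGroup Y)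
    (hW : IsPartialGroup W) : Nonempty (W ≅ wedge hX.1 hY.1) := by
  obtain ⟨r, ⟨hir, hjr⟩, -⟩ := hco _ ⟨wedge.reduced hX.1 hY.1, wedge.spiny hX.1 hY.1 hX.2 hY.2⟩
    (wedge.inl hX.1 hY.1) (wedge.inr hX.1 hY.1)
  let s := wedge.desc hX.1 hY.1 i j hW.1
  have hrs : r ≫ s = 𝟙 W := (hco W hW i j).unique
    ⟨by rw [← Category.assoc, hir, wedge.inl_desc], by rw [← Category.assoc, hjr, wedge.inr_desc]⟩
    ⟨Category.comp_id i, Category.comp_id j⟩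
  have hsr : s ≫ r = 𝟙 _ := wedge.hom_ext hX.1 hY.1
    (by rw [← Category.assoc, wedge.inl_desc, hir, Category.comp_id])
    (by rw [← Category.assoc, wedge.inr_desc, hjr, Category.comp_id])
  exact ⟨⟨r, s, hrs, hsr⟩⟩

/-- For finite-dimensional partial groups `X` and `Y`, the coproduct `X ∨ Y`
in the category of partial groups has dimension `max (dim X) (dim Y)`. -/
theorem dim_coproduct (X Y W : SymmSet) (i : X ⟶ W) (j : Y ⟶ W)
    (hX : IsPartialGroup X) (hY : IsPartialGroup Y) (hW : IsPartialGroup W)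
    (hco : IsPGCoproduct W X Y i j) (dx dy : ℕ)
    (hdx : HasDim X dx) (hdy : HasDim Y dy) :
    HasDim W (max dx dy) := by
  obtain ⟨e⟩ := hco.nonempty_iso_wedge hX hY hW
  exact (HasDim.max_of_skeletalLE_iff hdx hdy (SymmSet.wedge.skeletalLE_iff hX.1 hY.1)).of_iso e
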